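/- arXiv:0810.0026 — 4 statements merged into one kernel-verified Lean document; each statement's English description precedes it below -/
import Mathlib

section
/- Let H be a family of pairwise independent hash functions h : {0,1}^n → {0,1}^k, let S ⊆ {0,1}^n with |S| ≤ 2^{k−1}, and let V ⊆ S. Then the probability over a uniformly random h ∈ H that S ∩ h^{-1}(0^k) contains exactly one element and that this element lies in V is at least |V| / 2^{k+1}. -/
/-!
Fix `x ∈ V`. The hash of `x` hits the target with probability `p = 2^{-k}`, and whenever it
does without `x` being the only element of `S` that does, some other `y ∈ S` collides with it.
By pairwise independence and the union bound, `x` is therefore the unique element of `S` in the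
preimage with probability at least `p - |S| p² ≥ p / 2`. These events are disjoint for distinct
`x`, so summing over `V` gives `|V| p / 2`.
-/

open Finset

theorem Nat.card_exists_mem_eq_singleton {H α : Type*} [Finite H] (F : H → Finset α)
    (V : Finset α) :
    Nat.card {h : H // ∃ x ∈ V, F h = {x}} = ∑ x ∈ V, Nat.card {h : H // F h = {x}} := by
  classical
  have := Fintype.ofFinite H
  simp only [Nat.card_eq_fintype_card, Fintype.card_subtype]
  rw [← card_biUnion fun x _ y _ hxy => disjoint_left.mpr fun h hx hy =>
    hxy (singleton_injective ((mem_filter.mp hx).2.symm.trans (mem_filter.mp hy).2))]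
  congr 1
  ext h
  simp

section UniquePreimage

variable {H α β : Type*} [Fintype H] [DecidableEq α] [DecidableEq β]
  (g : H → α → β) (z : β) {S : Finset α} {x : α}

theorem card_le_card_unique_preimage_add_sum (hx : x ∈ S) :
    Nat.card {h : H // g h x = z} ≤
      Nat.card {h : H // S.filter (fun y => g h y = z) = {x}} +
        ∑ y ∈ S.erase x, Nat.card {h : H // g h x = z ∧ g h y = z} := by
  classical
  simp only [Nat.card_eq_fintype_card, Fintype.card_subtype]
  have hcover : univ.filter (fun h => g h x = z) ⊆
      univ.filter (fun h => S.filter (fun y => g h y = z) = {x}) ∪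
        (S.erase x).biUnion fun y => univ.filter fun h => g h x = z ∧ g h y = z := by
    intro h hh
    replace hh : g h x = z := (mem_filter.mp hh).2
    by_cases hunique : S.filter (fun y => g h y = z) = {x}
    · exact mem_union_left _ (by simpa using hunique)
    · obtain ⟨y, hyS, hyz, hyx⟩ : ∃ y ∈ S, g h y = z ∧ y ≠ x := by
        by_contra! hnone
        exact hunique (eq_singleton_iff_unique_mem.mpr
          ⟨mem_filter.mpr ⟨hx, hh⟩,
            fun y hy => hnone y (mem_filter.mp hy).1 (mem_filter.mp hy).2⟩)
      exact mem_union_right _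
        (mem_biUnion.mpr ⟨y, mem_erase.mpr ⟨hyx, hyS⟩, by simp [hh, hyz]⟩)
  calc _ ≤ _ := card_le_card hcover
    _ ≤ _ := card_union_le _ _
    _ ≤ _ := Nat.add_le_add_left card_biUnion_le _

theorem half_le_prob_unique_preimage {p : ℝ}
    (hp : (Nat.card {h : H // g h x = z} : ℝ) / Fintype.card H = p)
    (hpair : ∀ y ∈ S, y ≠ x →
      (Nat.card {h : H // g h x = z ∧ g h y = z} : ℝ) / Fintype.card H ≤ p * p)
    (hS : (S.card : ℝ) * p ≤ 1 / 2) (hx : x ∈ S) :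
    p / 2 ≤ (Nat.card {h : H // S.filter (fun y => g h y = z) = {x}} : ℝ) / Fintype.card H := by
  have hp0 : 0 ≤ p := hp ▸ by positivity
  have hcollide : ∑ y ∈ S.erase x,
      (Nat.card {h : H // g h x = z ∧ g h y = z} : ℝ) / Fintype.card H ≤ p / 2 :=
    calc _ ≤ ∑ _y ∈ S.erase x, p * p :=
          sum_le_sum fun y hy => hpair y (mem_of_mem_erase hy) (ne_of_mem_erase hy)
      _ ≤ S.card * p * p := by
          rw [sum_const, nsmul_eq_mul, ← mul_assoc]
          gcongr
          exact erase_subset x S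
      _ ≤ p / 2 := by nlinarith
  have hunion : p ≤
      (Nat.card {h : H // S.filter (fun y => g h y = z) = {x}} : ℝ) / Fintype.card H +
        ∑ y ∈ S.erase x,
          (Nat.card {h : H // g h x = z ∧ g h y = z} : ℝ) / Fintype.card H := by
    rw [← hp, ← sum_div, ← add_div]
    gcongr
    exact_mod_cast card_le_card_unique_preimage_add_sum g z hx
  linarith

end UniquePreimage

theorem hashing_unique_preimage_prob_general
    {H : Type*} [Fintype H] {n k : ℕ}
    (f : H → (Fin n → Bool) → (Fin k → Bool))
    (h1 : ∀ (x : Fin n → Bool) (a : Fin k → Bool),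
      (Nat.card {h : H // f h x = a} : ℝ) / Fintype.card H = 1 / 2 ^ k)
    (h2 : ∀ (x y : Fin n → Bool) (a b : Fin k → Bool), x ≠ y →
      (Nat.card {h : H // f h x = a ∧ f h y = b} : ℝ) / Fintype.card H =
        (1 / 2 ^ k) * (1 / 2 ^ k))
    (S V : Finset (Fin n → Bool)) (hVS : V ⊆ S)
    (hS : (S.card : ℝ) ≤ 2 ^ k / 2) :
    (V.card : ℝ) / 2 ^ (k + 1) ≤
      (Nat.card {h : H // ∃ x ∈ V,
          S.filter (fun y => f h y = fun _ => false) = {x}} : ℝ) / Fintype.card H := by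
  have hS' : (S.card : ℝ) * (1 / 2 ^ k) ≤ 1 / 2 := by
    rw [mul_one_div, div_le_iff₀ (by positivity)]
    linarith
  have hunique : ∀ x ∈ V, (1 : ℝ) / 2 ^ (k + 1) ≤
      (Nat.card {h : H // S.filter (fun y => f h y = fun _ => false) = {x}} : ℝ) /
        Fintype.card H := fun x hx => by
    have := half_le_prob_unique_preimage f (fun _ => false) (h1 x _)
      (fun y _ hyx => (h2 x y _ _ hyx.symm).le) hS' (hVS hx)
    rwa [pow_succ, ← div_div]
  rw [Nat.card_exists_mem_eq_singleton, Nat.cast_sum, sum_div]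
  calc (V.card : ℝ) / 2 ^ (k + 1) = ∑ _x ∈ V, (1 : ℝ) / 2 ^ (k + 1) := by
        rw [sum_const, nsmul_eq_mul, mul_one_div]
    _ ≤ _ := sum_le_sum hunique

/-- Valiant–Vazirani hashing lemma: let `f : H → ({0,1}^n → {0,1}^k)` be a
pairwise independent family of hash functions (uniform h ∈ H), let S ⊆ {0,1}^n with
|S| ≤ 2^{k−1} and V ⊆ S. Then the probability over uniform h that S ∩ h⁻¹(0^k) consists
of exactly one element lying in V is at least |V| / 2^{k+1}. -/
theorem hashing_unique_preimage_prob
    {H : Type*} [Fintype H] [Nonempty H] {n k : ℕ}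
    (f : H → (Fin n → Bool) → (Fin k → Bool))
    (h1 : ∀ (x : Fin n → Bool) (a : Fin k → Bool),
      (Nat.card {h : H // f h x = a} : ℝ) / Fintype.card H = 1 / 2 ^ k)
    (h2 : ∀ (x y : Fin n → Bool) (a b : Fin k → Bool), x ≠ y →
      (Nat.card {h : H // f h x = a ∧ f h y = b} : ℝ) / Fintype.card H =
        (1 / 2 ^ k) * (1 / 2 ^ k))
    (S V : Finset (Fin n → Bool)) (hVS : V ⊆ S)
    (hS : (S.card : ℝ) ≤ 2 ^ k / 2) :
    (V.card : ℝ) / 2 ^ (k + 1) ≤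
      (Nat.card {h : H // ∃ x ∈ V,
          S.filter (fun y => f h y = fun _ => false) = {x}} : ℝ) / Fintype.card H :=
  hashing_unique_preimage_prob_general f h1 h2 S V hVS hS
end

section
/- Let S be the set of separable states on a finite-dimensional multipartite Hilbert space, R_G(ρ) := min { s ≥ 0 : ∃ state π with (ρ + sπ)/(1+s) ∈ S } the global robustness, and LR_G(ρ) := log₂(1 + R_G(ρ)). If Λ is a completely positive trace-preserving map such that R_G(Λ(σ)) ≤ ε for every σ ∈ S, then for every state ρ, LR_G(Λ(ρ)) ≤ log₂(1 + ε) + LR_G(ρ). -/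
open Matrix ComplexOrder

/-- A quantum state: a positive semidefinite operator of unit trace. -/
def IsState {n : Type*} [Fintype n] [DecidableEq n] (ρ : Matrix n n ℂ) : Prop :=
  ρ.PosSemidef ∧ ρ.trace = 1

/-- The tensor product of m single-party operators, as an operator on the
multipartite Hilbert space. -/
def prodMat {m : ℕ} {d : Fin m → ℕ} (σ : ∀ i, Matrix (Fin (d i)) (Fin (d i)) ℂ) :
    Matrix (∀ i, Fin (d i)) (∀ i, Fin (d i)) ℂ :=
  Matrix.of fun x y => ∏ i, σ i (x i) (y i)

/-- Fully separable states on the multipartite space: convex combinations of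
product states. -/
def IsSepState {m : ℕ} {d : Fin m → ℕ}
    (ρ : Matrix (∀ i, Fin (d i)) (∀ i, Fin (d i)) ℂ) : Prop :=
  ∃ (N : ℕ) (p : Fin N → ℝ) (σ : Fin N → ∀ i, Matrix (Fin (d i)) (Fin (d i)) ℂ),
    (∀ j, 0 ≤ p j) ∧ (∑ j, p j = 1) ∧
    (∀ j i, (σ j i).PosSemidef ∧ (σ j i).trace = 1) ∧
    ρ = ∑ j, (p j : ℂ) • prodMat (σ j)

/-- The global robustness of entanglement:
R_G(ρ) = min { s ≥ 0 : ∃ state π with (ρ + sπ)/(1+s) separable }. -/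
noncomputable def RG {m : ℕ} {d : Fin m → ℕ}
    (ρ : Matrix (∀ i, Fin (d i)) (∀ i, Fin (d i)) ℂ) : ℝ :=
  sInf { s : ℝ | 0 ≤ s ∧ ∃ π, IsState π ∧ IsSepState ((1 + s)⁻¹ • (ρ + s • π)) }

/-- A completely positive (Kraus form) trace-preserving map. -/
def IsCPTP {n : Type*} [Fintype n] [DecidableEq n]
    (Λ : Matrix n n ℂ →ₗ[ℂ] Matrix n n ℂ) : Prop :=
  (∃ (N : ℕ) (K : Fin N → Matrix n n ℂ), ∀ X, Λ X = ∑ i, K i * X * (K i)ᴴ) ∧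
    (∀ X, (Λ X).trace = X.trace)

/-! Write a mixture witnessing `R_G(ρ) ≤ s` as `ρ = (1 + s) σ - s π` with `σ` separable. By
linearity `Λ ρ = (1 + s) Λ σ - s Λ π`, and if `(Λ σ + t τ) / (1 + t)` is separable, then adding the
noise `s Λ π + t (1 + s) τ` to `Λ ρ` yields `(1 + s)(1 + t)` times that separable state. Hence
`1 + R_G(Λ ρ) ≤ (1 + s)(1 + R_G(Λ σ)) ≤ (1 + s)(1 + ε)`, and the infimum over `s` gives
`1 + R_G(Λ ρ) ≤ (1 + ε)(1 + R_G(ρ))`. All infima are over nonempty sets because every state becomes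
the maximally mixed state after adding suitable noise. -/

open MatrixOrder

section States

variable {n : Type*} [Fintype n] [DecidableEq n] {ρ π : Matrix n n ℂ}

theorem IsState.eigenvalues_le_one (hρ : IsState ρ) (i : n) : hρ.1.1.eigenvalues i ≤ 1 := by
  have hsum : ∑ j, hρ.1.1.eigenvalues j = 1 := by
    apply RCLike.ofReal_injective (K := ℂ)
    rw [RCLike.ofReal_sum, RCLike.ofReal_one]
    exact hρ.1.1.trace_eq_sum_eigenvalues.symm.trans hρ.2
  exact hsum ▸ Finset.single_le_sum (fun j _ => hρ.1.eigenvalues_nonneg j) (Finset.mem_univ i)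

theorem IsState.le_smul_one (hρ : IsState ρ) {c : ℝ} (hc : 1 ≤ c) : ρ ≤ c • 1 := by
  rw [← Algebra.algebraMap_eq_smul_one]
  refine le_algebraMap_of_spectrum_le (fun x hx => ?_) hρ.1.1
  rw [hρ.1.1.spectrum_real_eq_range_eigenvalues] at hx
  obtain ⟨i, rfl⟩ := hx
  exact (hρ.eigenvalues_le_one i).trans hc

theorem IsState.convexComb (hρ : IsState ρ) (hπ : IsState π) {a : ℝ} (ha₀ : 0 ≤ a)
    (ha₁ : a ≤ 1) : IsState (a • ρ + (1 - a) • π) :=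
  ⟨(hρ.1.smul ha₀).add (hπ.1.smul (sub_nonneg.2 ha₁)), by
    simp [trace_add, trace_smul, hρ.2, hπ.2]⟩

theorem IsState.mix (hρ : IsState ρ) (hπ : IsState π) {s : ℝ} (hs : 0 ≤ s) :
    IsState ((1 + s)⁻¹ • (ρ + s • π)) := by
  have h : (1 + s)⁻¹ • (ρ + s • π) = (1 + s)⁻¹ • ρ + (1 - (1 + s)⁻¹) • π := by
    match_scalars <;> field_simp
    ring
  rw [h]
  exact hρ.convexComb hπ (by positivity) (inv_le_one_of_one_le₀ (by linarith))

theorem IsCPTP.isState_map {Λ : Matrix n n ℂ →ₗ[ℂ] Matrix n n ℂ} (hΛ : IsCPTP Λ)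
    (hρ : IsState ρ) : IsState (Λ ρ) := by
  obtain ⟨⟨N, K, hK⟩, htr⟩ := hΛ
  refine ⟨?_, (htr ρ).trans hρ.2⟩
  rw [hK]
  exact Finset.sum_induction _ _ (fun _ _ => .add) .zero
    fun i _ => hρ.1.mul_mul_conjTranspose_same (K i)

end States

open scoped Pointwise in
theorem le_mul_one_add_csInf {S : Set ℝ} (hS : S.Nonempty) {x c : ℝ} (hc : 0 ≤ c)
    (h : ∀ s ∈ S, x ≤ c * (1 + s)) : x ≤ c * (1 + sInf S) := by
  have : x - c ≤ sInf (c • S) := le_csInf (hS.smul_set) <| by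
    rintro _ ⟨s, hs, rfl⟩
    linarith [h s hs, show c • s = c * s from rfl]
  rw [Real.sInf_smul_of_nonneg hc, smul_eq_mul] at this
  linarith

section Robustness

variable {m : ℕ} {d : Fin m → ℕ} {ρ σ π : Matrix (∀ i, Fin (d i)) (∀ i, Fin (d i)) ℂ}

theorem prodMat_smul_one (c : Fin m → ℝ) :
    prodMat (fun i => c i • (1 : Matrix (Fin (d i)) (Fin (d i)) ℂ)) = (∏ i, c i) • 1 := by
  ext x y
  by_cases h : x = y
  · subst h
    simp [prodMat]
  · obtain ⟨i, hi⟩ := Function.ne_iff.mp h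
    simp [prodMat, one_apply_ne h, Finset.prod_eq_zero (Finset.mem_univ i), one_apply_ne hi]

theorem isSepState_maxMixed [Nonempty (∀ i, Fin (d i))] :
    IsSepState ((Fintype.card (∀ i, Fin (d i)) : ℝ)⁻¹ •
      (1 : Matrix (∀ i, Fin (d i)) (∀ i, Fin (d i)) ℂ)) := by
  have hd : ∀ i, d i ≠ 0 := fun i => (Fin.pos (Classical.arbitrary (∀ i, Fin (d i)) i)).ne'
  refine ⟨1, fun _ => 1, fun _ i => (d i : ℝ)⁻¹ • 1, fun _ => zero_le_one, by simp,
    fun _ i => ⟨PosSemidef.one.smul (by positivity), ?_⟩, ?_⟩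
  · simp [trace_smul, hd i]
  · simp [prodMat_smul_one, Fintype.card_pi, Finset.prod_inv_distrib]

def robustnessSet (ρ : Matrix (∀ i, Fin (d i)) (∀ i, Fin (d i)) ℂ) : Set ℝ :=
  { s : ℝ | 0 ≤ s ∧ ∃ π, IsState π ∧ IsSepState ((1 + s)⁻¹ • (ρ + s • π)) }

theorem RG_nonneg (ρ : Matrix (∀ i, Fin (d i)) (∀ i, Fin (d i)) ℂ) : 0 ≤ RG ρ :=
  Real.sInf_nonneg fun _ hs => hs.1

theorem RG_le_of_mem {s : ℝ} (hs : s ∈ robustnessSet ρ) : RG ρ ≤ s :=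
  csInf_le ⟨0, fun _ ht => ht.1⟩ hs

theorem IsState.robustnessSet_nonempty (hρ : IsState ρ) : (robustnessSet ρ).Nonempty := by
  have : Nonempty (∀ i, Fin (d i)) := by
    by_contra h
    rw [not_nonempty_iff] at h
    simpa [trace] using hρ.2
  set D : ℝ := (Fintype.card (∀ i, Fin (d i)) : ℝ)
  have hD : 0 < D := by positivity
  have hmix : (1 + D)⁻¹ • (ρ + D • D⁻¹ • (((1 + D) / D) • 1 - ρ)) = D⁻¹ • 1 := by
    rw [smul_inv_smul₀ hD.ne', add_sub_cancel, smul_smul]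
    congr 1
    field_simp
  refine ⟨D, hD.le, D⁻¹ • (((1 + D) / D) • 1 - ρ), ⟨?_, ?_⟩, hmix ▸ isSepState_maxMixed⟩
  · exact (le_iff.1 (hρ.le_smul_one ((one_le_div hD).2 (by linarith)))).smul (inv_nonneg.2 hD.le)
  · rw [trace_smul, trace_sub, trace_smul, trace_one, hρ.2, ← Complex.ofReal_natCast]
    have : (D : ℂ) ≠ 0 := Complex.ofReal_ne_zero.2 hD.ne'
    simp only [Complex.real_smul, Complex.ofReal_inv, Complex.ofReal_div, Complex.ofReal_add,
      Complex.ofReal_one]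
    field_simp
    ring

theorem add_add_mul_mem_robustnessSet (hπ : IsState π) {s t : ℝ} (hs : 0 ≤ s)
    (hρ : ρ = (1 + s) • σ - s • π) (ht : t ∈ robustnessSet σ) :
    s + t + s * t ∈ robustnessSet ρ := by
  obtain ⟨ht, τ, hτ, hsep⟩ := ht
  set r := s + t + s * t with hr_def
  have hr : 0 ≤ r := by positivity
  have hsr : s ≤ r := by nlinarith
  -- `s / r = 0` when `r = 0`, so the degenerate case `s = t = 0` needs no separate treatment.
  have hrs : r * (s / r) = s := mul_div_cancel_of_imp' fun h => le_antisymm (h ▸ hsr) hs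
  refine ⟨hr, (s / r) • π + (1 - s / r) • τ,
    hπ.convexComb hτ (div_nonneg hs hr) (div_le_one_of_le₀ hsr hr), ?_⟩
  have hsum : ρ + r • ((s / r) • π + (1 - s / r) • τ) = (1 + s) • (σ + t • τ) := by
    rw [hρ, smul_add, smul_smul, smul_smul, mul_sub, mul_one, hrs, hr_def]
    module
  have hscale : (1 + r)⁻¹ * (1 + s) = (1 + t)⁻¹ := by
    field_simp
    ring
  rwa [hsum, smul_smul, hscale]

theorem one_add_RG_le_mul (hσ : IsState σ) (hπ : IsState π) {s : ℝ} (hs : 0 ≤ s)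
    (hρ : ρ = (1 + s) • σ - s • π) : 1 + RG ρ ≤ (1 + s) * (1 + RG σ) :=
  le_mul_one_add_csInf hσ.robustnessSet_nonempty (by linarith) fun t ht => by
    linarith [RG_le_of_mem (add_add_mul_mem_robustnessSet hπ hs hρ ht)]

theorem IsCPTP.one_add_RG_map_le_mul
    {Λ : Matrix (∀ i, Fin (d i)) (∀ i, Fin (d i)) ℂ →ₗ[ℂ]
      Matrix (∀ i, Fin (d i)) (∀ i, Fin (d i)) ℂ}
    (hΛ : IsCPTP Λ) {ε : ℝ} (hε : 0 ≤ ε) (hne : ∀ σ, IsState σ → IsSepState σ → RG (Λ σ) ≤ ε)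
    (hρ : IsState ρ) : 1 + RG (Λ ρ) ≤ (1 + ε) * (1 + RG ρ) := by
  refine le_mul_one_add_csInf hρ.robustnessSet_nonempty (by linarith) ?_
  rintro s ⟨hs, π, hπ, hsep⟩
  have hσ := hρ.mix hπ hs
  have hρσ : ρ = (1 + s) • ((1 + s)⁻¹ • (ρ + s • π)) - s • π := by
    rw [smul_inv_smul₀ (by positivity), add_sub_cancel_right]
  calc 1 + RG (Λ ρ) ≤ (1 + s) * (1 + RG (Λ ((1 + s)⁻¹ • (ρ + s • π)))) :=
        one_add_RG_le_mul (hΛ.isState_map hσ) (hΛ.isState_map hπ) hs <| by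
          conv_lhs => rw [hρσ]
          simp only [map_sub, LinearMap.map_smul_of_tower]
    _ ≤ (1 + s) * (1 + ε) := by gcongr; exact hne _ hσ hsep
    _ = (1 + ε) * (1 + s) := mul_comm _ _

end Robustness

/-- if Λ is a CPTP map with R_G(Λ(σ)) ≤ ε for every separable state σ, then
for every state ρ, LR_G(Λ(ρ)) ≤ log₂(1+ε) + LR_G(ρ), where LR_G = log₂(1 + R_G). -/
theorem logRobustness_increase_bound {m : ℕ} {d : Fin m → ℕ}
    (Λ : Matrix (∀ i, Fin (d i)) (∀ i, Fin (d i)) ℂ →ₗ[ℂ]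
         Matrix (∀ i, Fin (d i)) (∀ i, Fin (d i)) ℂ)
    (hΛ : IsCPTP Λ) (ε : ℝ) (hε : 0 ≤ ε)
    (hne : ∀ σ, IsState σ → IsSepState σ → RG (Λ σ) ≤ ε) :
    ∀ ρ, IsState ρ →
      Real.logb 2 (1 + RG (Λ ρ)) ≤ Real.logb 2 (1 + ε) + Real.logb 2 (1 + RG ρ) := by
  intro ρ hρ
  have key := hΛ.one_add_RG_map_le_mul hε hne hρ
  have hpos : 0 < 1 + RG ρ := by linarith [RG_nonneg ρ]
  calc Real.logb 2 (1 + RG (Λ ρ)) ≤ Real.logb 2 ((1 + ε) * (1 + RG ρ)) :=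
        Real.logb_le_logb_of_le one_lt_two (by linarith [RG_nonneg (Λ ρ)]) key
    _ = Real.logb 2 (1 + ε) + Real.logb 2 (1 + RG ρ) := Real.logb_mul (by positivity) hpos.ne'
end

section
/- For closed convex cones A and B in a finite-dimensional real inner product space, the dual cone of their intersection equals the closure of the sum of their dual cones: (A ∩ B)* = cl(A* + B*). -/
/-!
Proper cones form a lattice in which `C ⊔ D` is the closure of `C + D`. Inner duality sends `⊔`
to `⊓` by a direct computation, and since it is an involution on proper cones (Farkas' lemma)
it also sends `⊓` to `⊔`. A closed convex cone is either empty, where both sides are the whole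
space, or a proper cone.
-/

open Pointwise
open scoped RealInnerProductSpace

namespace ProperCone

variable {E : Type*} [NormedAddCommGroup E] [InnerProductSpace ℝ E]

lemma coe_sup (C D : ProperCone ℝ E) :
    ((C ⊔ D : ProperCone ℝ E) : Set E) = closure ((C : Set E) + (D : Set E)) := by
  rw [ClosedSubmodule.coe_sup, Submodule.carrier_eq_coe, Submodule.coe_sup]
  rfl

variable [CompleteSpace E]

lemma le_innerDual_singleton_iff {C : ProperCone ℝ E} {y : E} :
    C ≤ innerDual {y} ↔ y ∈ innerDual (C : Set E) := by
  simp [SetLike.le_def, real_inner_comm]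

lemma innerDual_sup (C D : ProperCone ℝ E) :
    innerDual ((C ⊔ D : ProperCone ℝ E) : Set E) = innerDual C ⊓ innerDual D := by
  refine le_antisymm (le_inf ?_ ?_) fun y ⟨hyC, hyD⟩ => ?_
  · exact innerDual_le_innerDual (SetLike.coe_subset_coe.mpr le_sup_left)
  · exact innerDual_le_innerDual (SetLike.coe_subset_coe.mpr le_sup_right)
  · exact le_innerDual_singleton_iff.mp
      (sup_le (le_innerDual_singleton_iff.mpr hyC) (le_innerDual_singleton_iff.mpr hyD))

lemma innerDual_inf (C D : ProperCone ℝ E) :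
    innerDual ((C ⊓ D : ProperCone ℝ E) : Set E) = innerDual C ⊔ innerDual D := by
  conv_lhs => rw [← innerDual_innerDual C, ← innerDual_innerDual D, ← innerDual_sup]
  exact innerDual_innerDual _

end ProperCone

/-- for closed convex cones A, B in a finite-dimensional real inner product
space, the dual cone of their intersection equals the closure of the sum of their dual
cones: (A ∩ B)* = cl(A* + B*). -/
theorem innerDualCone_inter_eq_closure_add {n : ℕ}
    (A B : ConvexCone ℝ (EuclideanSpace ℝ (Fin n)))
    (hA : IsClosed (A : Set (EuclideanSpace ℝ (Fin n))))
    (hB : IsClosed (B : Set (EuclideanSpace ℝ (Fin n)))) :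
    ((ProperCone.innerDual ((A : Set (EuclideanSpace ℝ (Fin n))) ∩
        (B : Set (EuclideanSpace ℝ (Fin n))))) :
      Set (EuclideanSpace ℝ (Fin n))) =
    closure
      ((ProperCone.innerDual (A : Set (EuclideanSpace ℝ (Fin n))) :
          Set (EuclideanSpace ℝ (Fin n))) +
        (ProperCone.innerDual (B : Set (EuclideanSpace ℝ (Fin n))) :
          Set (EuclideanSpace ℝ (Fin n)))) := by
  rcases (A : Set (EuclideanSpace ℝ (Fin n))).eq_empty_or_nonempty with hA_empty | hA_nonempty
  · simp [hA_empty]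
  rcases (B : Set (EuclideanSpace ℝ (Fin n))).eq_empty_or_nonempty with hB_empty | hB_nonempty
  · simp [hB_empty]
  lift A to ProperCone ℝ (EuclideanSpace ℝ (Fin n)) using ⟨hA_nonempty, hA⟩
  lift B to ProperCone ℝ (EuclideanSpace ℝ (Fin n)) using ⟨hB_nonempty, hB⟩
  exact (congrArg SetLike.coe (ProperCone.innerDual_inf A B)).trans (ProperCone.coe_sup _ _)
end

section
/- Let P be a probability distribution on a finite set X and let x = (x_1,...,x_n) be drawn i.i.d. from P. Let λ_x denote the empirical (type) distribution of x. Then for any δ > 0, Pr[ ‖λ_x − P‖₁ > δ ] ≤ 2^{ −n ( δ²/(2 ln 2) − |X| · log₂(n+1)/n ) }. -/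
/-!
Writing `d = λ_x − P`, we have `∑ d = 0`, so `‖d‖₁ = 2 ∑_{d > 0} d`; hence if `‖d‖₁ > δ`, some
`A ⊆ X` has `λ_x(A) − P(A) > δ / 2`. For a fixed `A` this has probability at most
`exp (−n δ² / 2)` by Hoeffding's inequality for the i.i.d. indicators of `A`, and a union bound
over the `2^|X| ≤ (n + 1)^|X|` subsets gives the claim.
-/

open Real Finset MeasureTheory ProbabilityTheory

theorem sum_prod_apply_eq_pow {ι X R : Type*} [Fintype ι] [DecidableEq ι] [Fintype X]
    [CommSemiring R] (f : X → R) :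
    ∑ x : ι → X, ∏ i, f (x i) = (∑ a, f a) ^ Fintype.card ι := by
  rw [← Fintype.prod_sum fun _ a ↦ f a, prod_const, card_univ]

theorem sum_ite_lt_le_exp_mul_sum {α : Type*} (s : Finset α) {g w : α → ℝ}
    (hw : ∀ x ∈ s, 0 ≤ w x) {t : ℝ} (ht : 0 ≤ t) (c : ℝ) :
    ∑ x ∈ s, (if c < g x then w x else 0) ≤ exp (-(t * c)) * ∑ x ∈ s, exp (t * g x) * w x := by
  rw [mul_sum]
  refine sum_le_sum fun x hx ↦ ?_
  split_ifs with hc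
  · have : 1 ≤ exp (-(t * c)) * exp (t * g x) := by
      rw [← exp_add]; exact one_le_exp (by nlinarith)
    nlinarith [hw x hx]
  · have := hw x hx; positivity

theorem ite_le_sum_ite {ι M : Type*} [AddCommMonoid M] [PartialOrder M] [IsOrderedAddMonoid M]
    {p : Prop} [Decidable p] {q : ι → Prop} [DecidablePred q] (s : Finset ι) {w : M}
    (hw : 0 ≤ w) (h : p → ∃ i ∈ s, q i) :
    (if p then w else 0) ≤ ∑ i ∈ s, if q i then w else 0 := by
  have hnonneg : ∀ i ∈ s, 0 ≤ if q i then w else 0 := fun i _ ↦ by split_ifs <;> simp [hw]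
  split_ifs with hp
  · obtain ⟨i, hi, hq⟩ := h hp
    exact (if_pos hq).symm.le.trans (single_le_sum hnonneg hi)
  · exact sum_nonneg hnonneg

theorem sum_abs_eq_two_mul_sum_filter_pos {ι : Type*} (s : Finset ι) {d : ι → ℝ}
    (h : ∑ a ∈ s, d a = 0) : ∑ a ∈ s, |d a| = 2 * ∑ a ∈ s with 0 < d a, d a := by
  have abs_eq (y : ℝ) : |y| = 2 * (if 0 < y then y else 0) - y := by
    split_ifs with hy
    · rw [abs_of_pos hy]; ring
    · rw [abs_of_nonpos (not_lt.1 hy)]; ring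
  rw [sum_congr rfl fun a _ ↦ abs_eq (d a), sum_sub_distrib, ← mul_sum, ← sum_filter, h, sub_zero]

theorem sum_mul_exp_le_exp_of_mem_Icc {X : Type*} [Fintype X] {P f : X → ℝ} (hP : ∀ a, 0 ≤ P a)
    (hP1 : ∑ a, P a = 1) (hf : ∀ a, f a ∈ Set.Icc (0 : ℝ) 1) (t : ℝ) :
    ∑ a, P a * exp (t * f a) ≤ exp (t * ∑ a, P a * f a + t ^ 2 / 8) := by
  -- the law of `f` under `P`
  let μ : Measure ℝ := ∑ a, ENNReal.ofReal (P a) • Measure.dirac (f a)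
  have integral_eq (g : ℝ → ℝ) : ∫ y, g y ∂μ = ∑ a, P a * g (f a) := by
    rw [integral_finsetSum_measure]
    · simp [integral_smul_measure, ENNReal.toReal_ofReal (hP _)]
    · exact fun a _ ↦ (integrable_dirac enorm_lt_top).smul_measure ENNReal.ofReal_ne_top
  have : IsProbabilityMeasure μ := ⟨by
    simp [μ, ← ENNReal.ofReal_sum_of_nonneg fun a _ ↦ hP a, hP1]⟩
  have hsupp : ∀ᵐ y ∂μ, id y ∈ Set.Icc (0 : ℝ) 1 :=
    ae_iff.2 (by simp [μ, fun a ↦ (hf a).1, fun a ↦ (hf a).2])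
  have hoeffding := (hasSubgaussianMGF_of_mem_Icc aemeasurable_id hsupp).mgf_le t
  simp only [mgf, integral_eq, id] at hoeffding
  set m := ∑ a, P a * f a
  calc ∑ a, P a * exp (t * f a) = exp (t * m) * ∑ a, P a * exp (t * (f a - m)) := by
        rw [mul_sum]; congr 1 with a; rw [mul_sub, exp_sub]; field_simp
    _ ≤ exp (t * m) * exp (t ^ 2 / 8) := by
        gcongr; refine hoeffding.trans_eq ?_; norm_num; ring
    _ = exp (t * m + t ^ 2 / 8) := (exp_add _ _).symm

theorem sum_ite_lt_sum_apply_le_exp {X : Type*} [Fintype X] {P f : X → ℝ}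
    (hP : ∀ a, 0 ≤ P a) (hP1 : ∑ a, P a = 1) (hf : ∀ a, f a ∈ Set.Icc (0 : ℝ) 1) (n : ℕ)
    {ε : ℝ} (hε : 0 ≤ ε) :
    ∑ x : Fin n → X, (if n * (∑ a, P a * f a + ε) < ∑ i, f (x i) then ∏ i, P (x i) else 0) ≤
      exp (-(2 * n * ε ^ 2)) := by
  set m := ∑ a, P a * f a
  calc _ ≤ exp (-(4 * ε * (n * (m + ε)))) *
          ∑ x : Fin n → X, exp (4 * ε * ∑ i, f (x i)) * ∏ i, P (x i) :=
        sum_ite_lt_le_exp_mul_sum _ (fun x _ ↦ prod_nonneg fun i _ ↦ hP (x i)) (by positivity) _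
    _ = exp (-(4 * ε * (n * (m + ε)))) * (∑ a, P a * exp (4 * ε * f a)) ^ n := by
        simp only [mul_sum, exp_sum, ← prod_mul_distrib, mul_comm (exp _)]
        rw [sum_prod_apply_eq_pow fun a ↦ P a * exp (4 * ε * f a), Fintype.card_fin]
    _ ≤ exp (-(4 * ε * (n * (m + ε)))) * exp (4 * ε * m + (4 * ε) ^ 2 / 8) ^ n := by
        have : 0 ≤ ∑ a, P a * exp (4 * ε * f a) := sum_nonneg fun a _ ↦ by have := hP a; positivity
        gcongr
        exact sum_mul_exp_le_exp_of_mem_Icc hP hP1 hf _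
    _ = exp (-(2 * n * ε ^ 2)) := by
        rw [← exp_nat_mul, ← exp_add]; ring_nf

theorem sum_ite_freq_sub_prob_gt_le_exp {X : Type*} [Fintype X] [DecidableEq X] {P : X → ℝ}
    (hP : ∀ a, 0 ≤ P a) (hP1 : ∑ a, P a = 1) (A : Finset X) {n : ℕ} (hn : 0 < n) {ε : ℝ}
    (hε : 0 ≤ ε) :
    ∑ x : Fin n → X,
        (if ε < (#{i | x i ∈ A} : ℝ) / n - ∑ a ∈ A, P a then ∏ i, P (x i) else 0) ≤
      exp (-(2 * n * ε ^ 2)) := by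
  have hf : ∀ a, (if a ∈ A then 1 else 0 : ℝ) ∈ Set.Icc 0 1 := fun a ↦ by split_ifs <;> simp
  refine le_of_eq_of_le (sum_congr rfl fun x _ ↦ ?_) (sum_ite_lt_sum_apply_le_exp hP hP1 hf n hε)
  have hn' : (0 : ℝ) < n := by exact_mod_cast hn
  simp only [mul_ite, mul_one, mul_zero, sum_ite_mem, univ_inter, sum_boole,
    lt_sub_iff_add_lt', lt_div_iff₀ hn', mul_comm]

theorem exists_freq_sub_prob_gt_of_lt_sum_abs {X : Type*} [Fintype X] [DecidableEq X]
    {P : X → ℝ} (hP1 : ∑ a, P a = 1) {n : ℕ} (hn : 0 < n) (x : Fin n → X) {δ : ℝ}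
    (h : δ < ∑ a, |(#{i | x i = a} : ℝ) / n - P a|) :
    ∃ A : Finset X, δ / 2 < (#{i | x i ∈ A} : ℝ) / n - ∑ a ∈ A, P a := by
  set d : X → ℝ := fun a ↦ (#{i | x i = a} : ℝ) / n - P a
  have sum_d (B : Finset X) : ∑ a ∈ B, d a = (#{i | x i ∈ B} : ℝ) / n - ∑ a ∈ B, P a := by
    simp only [d, sum_sub_distrib, ← sum_div]
    rw [← Nat.cast_sum, sum_card_fiberwise_eq_card_filter]
  have hd : ∑ a, d a = 0 := by
    rw [sum_d, hP1, filter_true_of_mem fun i _ ↦ mem_univ (x i), card_univ, Fintype.card_fin,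
      div_self (by exact_mod_cast hn.ne'), sub_self]
  refine ⟨({a | 0 < d a} : Finset X), ?_⟩
  rw [← sum_d]
  linarith [sum_abs_eq_two_mul_sum_filter_pos univ hd]

theorem two_rpow_neg_mul_eq_exp_mul_pow {n : ℕ} (hn : n ≠ 0) (k : ℕ) (δ : ℝ) :
    (2 : ℝ) ^ (-(n : ℝ) * (δ ^ 2 / (2 * log 2) - k * logb 2 (n + 1) / n)) =
      exp (-(2 * n * (δ / 2) ^ 2)) * ((n : ℝ) + 1) ^ k := by
  have hn' : (n : ℝ) ≠ 0 := by exact_mod_cast hn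
  have hexponent : -(n : ℝ) * (δ ^ 2 / (2 * log 2) - k * logb 2 (n + 1) / n) =
      -(2 * n * (δ / 2) ^ 2) / log 2 + k * logb 2 (n + 1) := by
    field_simp
    ring
  rw [hexponent, rpow_add two_pos, rpow_def_of_pos two_pos, mul_comm (k : ℝ),
    rpow_mul zero_le_two, rpow_logb two_pos (by norm_num) (by positivity), rpow_natCast]
  congr 2
  field_simp

/-- Chernoff–Hoeffding bound for types: for x = (x_1,...,x_n) drawn i.i.d.
from the distribution P on a finite set X, the probability that the empirical
distribution λ_x deviates from P by more than δ in ℓ¹ distance is at most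
2^{−n(δ²/(2 ln 2) − |X| log₂(n+1)/n)}. -/
theorem empirical_distribution_deviation_bound
    {X : Type*} [Fintype X] [DecidableEq X] (n : ℕ) (hn : 1 ≤ n)
    (P : X → ℝ) (hP : ∀ a, 0 ≤ P a) (hP1 : ∑ a, P a = 1)
    (δ : ℝ) (hδ : 0 < δ) :
    (∑ x : Fin n → X,
        if δ < ∑ a, |((Finset.univ.filter fun i => x i = a).card : ℝ) / n - P a| then
          ∏ i, P (x i)
        else 0) ≤
      (2 : ℝ) ^ (-(n : ℝ) *
        (δ ^ 2 / (2 * Real.log 2) - (Fintype.card X : ℝ) * Real.logb 2 (n + 1) / n)) := by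
  calc _ ≤ ∑ x : Fin n → X, ∑ A : Finset X,
          (if δ / 2 < (#{i | x i ∈ A} : ℝ) / n - ∑ a ∈ A, P a then ∏ i, P (x i) else 0) :=
        sum_le_sum fun x _ ↦ ite_le_sum_ite _ (prod_nonneg fun i _ ↦ hP (x i)) fun h ↦
          (exists_freq_sub_prob_gt_of_lt_sum_abs hP1 hn x h).imp fun _ hA ↦ ⟨mem_univ _, hA⟩
    _ = ∑ A : Finset X, ∑ x : Fin n → X,
          (if δ / 2 < (#{i | x i ∈ A} : ℝ) / n - ∑ a ∈ A, P a then ∏ i, P (x i) else 0) :=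
        sum_comm
    _ ≤ ∑ _A : Finset X, exp (-(2 * n * (δ / 2) ^ 2)) :=
        sum_le_sum fun A _ ↦ sum_ite_freq_sub_prob_gt_le_exp hP hP1 A hn (by positivity)
    _ = exp (-(2 * n * (δ / 2) ^ 2)) * 2 ^ Fintype.card X := by
        simp [Fintype.card_finset, mul_comm]
    _ ≤ exp (-(2 * n * (δ / 2) ^ 2)) * ((n : ℝ) + 1) ^ Fintype.card X := by
        gcongr
        linarith [(Nat.one_le_cast (α := ℝ)).2 hn]
    _ = _ := (two_rpow_neg_mul_eq_exp_mul_pow (by omega) _ _).symm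
end
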